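/- arXiv:1204.6624 — 8 statements merged into one kernel-verified Lean document; each statement's English description precedes it below -/
import Mathlib

section
/- If a chain (A_n) of row-stochastic matrices is self-confident with constant δ > 0 and type-symmetric with constant M, then it is balanced asymmetric (with some finite constant M' ≥ 1 depending on δ, M, and s). -/
/-- Self-confidence plus type-symmetry implies balanced asymmetry. -/
theorem selfConfident_typeSymmetric_implies_balancedAsymmetric {s : ℕ}
    (A : ℕ → Matrix (Fin s) (Fin s) ℝ)
    (hrs : ∀ n, (∀ i j, 0 ≤ A n i j) ∧ ∀ i, ∑ j, A n i j = 1)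
    (δ : ℝ) (hδ : 0 < δ) (hself : ∀ n i, δ < A n i i)
    (M : ℝ) (hM : 0 < M)
    (htype : ∀ (T : Finset (Fin s)), T.Nonempty → T ≠ Finset.univ → ∀ n,
      ∑ i ∈ T, ∑ j ∈ Tᶜ, A n i j ≤ M * ∑ i ∈ Tᶜ, ∑ j ∈ T, A n i j) :
    ∃ M' : ℝ, 1 ≤ M' ∧ ∀ (S₁ S₂ : Finset (Fin s)), S₁.Nonempty → S₂.Nonempty →
      S₁.card = S₂.card → ∀ n,
      ∑ i ∈ S₁, ∑ j ∈ S₂ᶜ, A n i j ≤ M' * ∑ i ∈ S₁ᶜ, ∑ j ∈ S₂, A n i j := by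
  refine ⟨max 1 (max M (s / δ)), le_max_left _ _, ?_⟩
  set M' := max 1 (max M (s / δ)) with hM'def
  have hM'0 : (0:ℝ) ≤ M' := le_trans zero_le_one (le_max_left _ _)
  intro S₁ S₂ h₁ h₂ hcard n
  have hnn := (hrs n).1
  have hrow := (hrs n).2
  have hRHSnn : 0 ≤ ∑ i ∈ S₁ᶜ, ∑ j ∈ S₂, A n i j :=
    Finset.sum_nonneg fun i _ => Finset.sum_nonneg fun j _ => hnn i j
  by_cases hEq : S₁ = S₂
  · subst hEq
    by_cases hU : S₁ = Finset.univ
    · subst hU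
      simp
    · calc ∑ i ∈ S₁, ∑ j ∈ S₁ᶜ, A n i j
          ≤ M * ∑ i ∈ S₁ᶜ, ∑ j ∈ S₁, A n i j := htype S₁ h₁ hU n
        _ ≤ M' * ∑ i ∈ S₁ᶜ, ∑ j ∈ S₁, A n i j :=
          mul_le_mul_of_nonneg_right ((le_max_left M _).trans (le_max_right 1 _)) hRHSnn
  · have hns : ¬ S₂ ⊆ S₁ := fun h =>
      hEq ((Finset.eq_of_subset_of_card_le h hcard.le).symm)
    obtain ⟨i, hi2, hi1⟩ := Finset.not_subset.mp hns
    have hδR : δ ≤ ∑ i' ∈ S₁ᶜ, ∑ j ∈ S₂, A n i' j := by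
      have h1 : A n i i ≤ ∑ j ∈ S₂, A n i j :=
        Finset.single_le_sum (fun j _ => hnn i j) hi2
      have h2 : ∑ j ∈ S₂, A n i j ≤ ∑ i' ∈ S₁ᶜ, ∑ j ∈ S₂, A n i' j :=
        Finset.single_le_sum (fun i' _ => Finset.sum_nonneg fun j _ => hnn i' j)
          (Finset.mem_compl.mpr hi1)
      exact ((hself n i).le.trans h1).trans h2
    have hL : ∑ i ∈ S₁, ∑ j ∈ S₂ᶜ, A n i j ≤ (s:ℝ) := by
      calc ∑ i ∈ S₁, ∑ j ∈ S₂ᶜ, A n i j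
          ≤ ∑ i ∈ S₁, (1:ℝ) := by
            refine Finset.sum_le_sum fun i _ => ?_
            calc ∑ j ∈ S₂ᶜ, A n i j
                ≤ ∑ j, A n i j :=
                  Finset.sum_le_sum_of_subset_of_nonneg (Finset.subset_univ _)
                    (fun j _ _ => hnn i j)
              _ = 1 := hrow i
        _ = (S₁.card : ℝ) := by simp
        _ ≤ (s:ℝ) := by
            exact_mod_cast (S₁.card_le_univ.trans (by simp))
    have hsM : (s:ℝ)/δ ≤ M' := (le_max_right M _).trans (le_max_right 1 _)
    calc ∑ i ∈ S₁, ∑ j ∈ S₂ᶜ, A n i j ≤ (s:ℝ) := hL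
      _ = (s/δ) * δ := by field_simp
      _ ≤ M' * δ := mul_le_mul_of_nonneg_right hsM hδ.le
      _ ≤ M' * ∑ i' ∈ S₁ᶜ, ∑ j ∈ S₂, A n i' j :=
          mul_le_mul_of_nonneg_left hδR hM'0
end

section
/- For a self-confident chain of row-stochastic matrices, the absolute infinite flow property is equivalent to the infinite flow property. -/
open Filter

lemma flow_rearrange {s : ℕ} (A : Matrix (Fin s) (Fin s) ℝ) (T : Finset (Fin s)) :
    (∑ i ∈ T, ∑ j ∈ Tᶜ, A i j) + (∑ i ∈ Tᶜ, ∑ j ∈ T, A i j)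
      = ∑ i ∈ T, ∑ j ∈ Tᶜ, (A i j + A j i) := by
  rw [Finset.sum_comm (s := Tᶜ) (t := T) (f := fun i j => A i j)]
  simp [Finset.sum_add_distrib]

/-- For a self-confident chain of row-stochastic matrices, the absolute
infinite flow property is equivalent to the infinite flow property. -/
theorem selfConfident_absInfFlow_iff_infFlow {s : ℕ}
    (A : ℕ → Matrix (Fin s) (Fin s) ℝ)
    (hrs : ∀ n, (∀ i j, 0 ≤ A n i j) ∧ ∀ i, ∑ j, A n i j = 1)
    (δ : ℝ) (hδ : 0 < δ) (hself : ∀ n i, δ < A n i i) :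
    -- absolute infinite flow
    (∀ T : ℕ → Finset (Fin s), (∀ n, (T n).Nonempty) →
      (∀ n, T n ≠ Finset.univ) → (∀ n, (T n).card = (T 0).card) →
      Tendsto (fun N => ∑ n ∈ Finset.range N,
        ((∑ i ∈ T (n+1), ∑ j ∈ (T n)ᶜ, A n i j) +
         (∑ i ∈ (T (n+1))ᶜ, ∑ j ∈ T n, A n i j))) atTop atTop)
    ↔
    -- infinite flow
    (∀ T : Finset (Fin s), T.Nonempty → T ≠ Finset.univ →
      Tendsto (fun N => ∑ n ∈ Finset.range N,
        ∑ i ∈ T, ∑ j ∈ Tᶜ, (A n i j + A n j i)) atTop atTop) := by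
  constructor
  · intro h T hT hTne
    have := h (fun _ => T) (fun _ => hT) (fun _ => hTne) (fun _ => rfl)
    refine this.congr fun N => Finset.sum_congr rfl fun n _ => ?_
    exact flow_rearrange (A n) T
  · intro h T hT1 hT2 hTc
    set F : ℕ → ℝ := fun n => (∑ i ∈ T (n+1), ∑ j ∈ (T n)ᶜ, A n i j)
        + ∑ i ∈ (T (n+1))ᶜ, ∑ j ∈ T n, A n i j with hF
    have hFnonneg : ∀ n, 0 ≤ F n := fun n =>
      add_nonneg (Finset.sum_nonneg fun i _ => Finset.sum_nonneg fun j _ => (hrs n).1 i j)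
        (Finset.sum_nonneg fun i _ => Finset.sum_nonneg fun j _ => (hrs n).1 i j)
    have hFδ : ∀ n, T (n+1) ≠ T n → δ ≤ F n := by
      intro n hne
      have hcard : (T n).card ≤ (T (n+1)).card := by rw [hTc n, hTc (n+1)]
      have : ¬ T (n+1) ⊆ T n := fun hsub =>
        hne (Finset.eq_of_subset_of_card_le hsub hcard)
      obtain ⟨i, hi1, hi2⟩ := Finset.not_subset.mp this
      have h1 : A n i i ≤ ∑ j ∈ (T n)ᶜ, A n i j :=
        Finset.single_le_sum (fun j _ => (hrs n).1 i j) (Finset.mem_compl.mpr hi2)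
      have h2 : ∑ j ∈ (T n)ᶜ, A n i j ≤ ∑ i ∈ T (n+1), ∑ j ∈ (T n)ᶜ, A n i j :=
        Finset.single_le_sum (f := fun i => ∑ j ∈ (T n)ᶜ, A n i j)
          (fun i _ => Finset.sum_nonneg fun j _ => (hrs n).1 i j) hi1
      have h3 : (0:ℝ) ≤ ∑ i ∈ (T (n+1))ᶜ, ∑ j ∈ T n, A n i j :=
        Finset.sum_nonneg fun i _ => Finset.sum_nonneg fun j _ => (hrs n).1 i j
      have := (hself n i).le
      simp only [hF]
      linarith
    have hmono : Monotone (fun N => ∑ n ∈ Finset.range N, F n) := by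
      apply monotone_nat_of_le_succ
      intro N
      rw [Finset.sum_range_succ]
      exact le_add_of_nonneg_right (hFnonneg N)
    by_cases hD : {n | T (n+1) ≠ T n}.Infinite
    · apply tendsto_atTop_atTop_of_monotone hmono
      intro b
      obtain ⟨k, hk⟩ : ∃ k : ℕ, b ≤ δ * k := by
        refine ⟨⌈b / δ⌉₊, ?_⟩
        have := Nat.le_ceil (b / δ)
        calc b = δ * (b / δ) := by field_simp
          _ ≤ δ * ⌈b / δ⌉₊ := by nlinarith
      obtain ⟨t, hts, htc⟩ := hD.exists_subset_card_eq k
      refine ⟨t.sup id + 1, ?_⟩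
      have hsub : t ⊆ Finset.range (t.sup id + 1) := fun n hn =>
        Finset.mem_range.mpr (Nat.lt_succ_of_le (Finset.le_sup (f := id) hn))
      calc b ≤ δ * k := hk
        _ = ∑ _n ∈ t, δ := by rw [Finset.sum_const, htc, nsmul_eq_mul, mul_comm]
        _ ≤ ∑ n ∈ t, F n := Finset.sum_le_sum fun n hn => hFδ n (hts hn)
        _ ≤ ∑ n ∈ Finset.range (t.sup id + 1), F n :=
            Finset.sum_le_sum_of_subset_of_nonneg hsub fun n _ _ => hFnonneg n
    · rw [Set.not_infinite] at hD
      obtain ⟨M, hM⟩ := hD.bddAbove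
      set N₀ := M + 1 with hN₀
      have hstep : ∀ n, N₀ ≤ n → T (n+1) = T n := by
        intro n hn
        by_contra hne
        exact absurd (hM hne) (by omega)
      have hconst : ∀ n, N₀ ≤ n → T n = T N₀ := by
        intro n hn
        induction n, hn using Nat.le_induction with
        | base => rfl
        | succ n hn ih => rw [hstep n hn, ih]
      set T' := T N₀ with hT'
      have hg := h T' (hT1 N₀) (hT2 N₀)
      set g : ℕ → ℝ := fun n => ∑ i ∈ T', ∑ j ∈ T'ᶜ, (A n i j + A n j i) with hgdef
      have hFg : ∀ n, N₀ ≤ n → F n = g n := by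
        intro n hn
        simp only [hF, hgdef, hconst n hn, hconst (n+1) (le_trans hn (Nat.le_succ n))]
        exact flow_rearrange (A n) T'
      have heq : ∀ N, N₀ ≤ N →
          ∑ n ∈ Finset.range N, F n
            = (∑ n ∈ Finset.range N₀, F n - ∑ n ∈ Finset.range N₀, g n)
              + ∑ n ∈ Finset.range N, g n := by
        intro N hN
        have h1 : ∑ n ∈ Finset.range N₀, F n + ∑ n ∈ Finset.Ico N₀ N, F n
            = ∑ n ∈ Finset.range N, F n := Finset.sum_range_add_sum_Ico F hN
        have h2 : ∑ n ∈ Finset.range N₀, g n + ∑ n ∈ Finset.Ico N₀ N, g n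
            = ∑ n ∈ Finset.range N, g n := Finset.sum_range_add_sum_Ico g hN
        have h3 : ∑ n ∈ Finset.Ico N₀ N, F n = ∑ n ∈ Finset.Ico N₀ N, g n :=
          Finset.sum_congr rfl fun n hn => hFg n (Finset.mem_Ico.mp hn).1
        linarith
      refine Tendsto.congr' ?_
        (tendsto_atTop_add_const_left atTop
          (∑ n ∈ Finset.range N₀, F n - ∑ n ∈ Finset.range N₀, g n) hg)
      filter_upwards [eventually_ge_atTop N₀] with N hN
      exact (heq N hN).symm
end

section
/- For a balanced asymmetric chain with constant M, for any nonempty proper subset T of S and any n, ∑_{i∈T}∑_{j∉T}(a_{ij}(n)+a_{ji}(n)) ≤ (M+1) ∑_{i∉T}∑_{j∈T} a_{ij}(n). Consequently, for a balanced asymmetric chain the infinite flow property holds if and only if ∑_{n=0}^∞ ∑_{i∉T}∑_{j∈T} a_{ij}(n) = ∞ for every nonempty proper subset T of S. -/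
/-! Taking `S₁ = S₂ = T` in the balance condition bounds the flow out of `T` by `M` times the flow
into `T`, so the two-way flow across the cut is at most `M + 1` times the inflow; conversely, by
nonnegativity the inflow is at most the two-way flow. Hence the partial sums over time of the
two quantities diverge together. -/

open Filter Finset

section CutFlow

variable {ι R : Type*} [Fintype ι] [DecidableEq ι] [CommSemiring R] [PartialOrder R]
  [IsOrderedRing R] (A : ι → ι → R) (T : Finset ι)

theorem sum_compl_sum_le_sum_sum_compl_add_swap (hA : ∀ i j, 0 ≤ A i j) :
    ∑ i ∈ Tᶜ, ∑ j ∈ T, A i j ≤ ∑ i ∈ T, ∑ j ∈ Tᶜ, (A i j + A j i) := by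
  rw [sum_comm]
  exact sum_le_sum fun i _ => sum_le_sum fun j _ => le_add_of_nonneg_left (hA i j)

theorem sum_sum_compl_add_swap_le_of_le_mul {M : R}
    (hM : ∑ i ∈ T, ∑ j ∈ Tᶜ, A i j ≤ M * ∑ i ∈ Tᶜ, ∑ j ∈ T, A i j) :
    ∑ i ∈ T, ∑ j ∈ Tᶜ, (A i j + A j i) ≤ (M + 1) * ∑ i ∈ Tᶜ, ∑ j ∈ T, A i j :=
  calc ∑ i ∈ T, ∑ j ∈ Tᶜ, (A i j + A j i)
      = ∑ i ∈ T, ∑ j ∈ Tᶜ, A i j + ∑ i ∈ Tᶜ, ∑ j ∈ T, A i j := by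
        simp only [sum_add_distrib]; exact congrArg _ sum_comm
    _ ≤ M * ∑ i ∈ Tᶜ, ∑ j ∈ T, A i j + ∑ i ∈ Tᶜ, ∑ j ∈ T, A i j := by gcongr
    _ = (M + 1) * ∑ i ∈ Tᶜ, ∑ j ∈ T, A i j := by ring

end CutFlow

theorem tendsto_sum_range_atTop_iff_of_le_of_le_mul {f g : ℕ → ℝ} {c : ℝ} (hc : 0 < c)
    (hgf : ∀ n, g n ≤ f n) (hfg : ∀ n, f n ≤ c * g n) :
    Tendsto (fun N => ∑ n ∈ range N, f n) atTop atTop ↔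
      Tendsto (fun N => ∑ n ∈ range N, g n) atTop atTop := by
  refine ⟨fun hf => tendsto_atTop_mono (fun N => ?_) (hf.const_mul_atTop (inv_pos.2 hc)),
    tendsto_atTop_mono fun N => sum_le_sum fun n _ => hgf n⟩
  rw [inv_mul_le_iff₀ hc, mul_sum]
  exact sum_le_sum fun n _ => hfg n

/-- For a balanced asymmetric chain: a pointwise bound on symmetric cut flow,
and the resulting simplification of the infinite flow property. -/
theorem balancedAsymmetric_infFlow_iff {s : ℕ}
    (A : ℕ → Matrix (Fin s) (Fin s) ℝ)
    (hrs : ∀ n, (∀ i j, 0 ≤ A n i j) ∧ ∀ i, ∑ j, A n i j = 1)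
    (M : ℝ) (hM : 1 ≤ M)
    (hbal : ∀ (S₁ S₂ : Finset (Fin s)), S₁.Nonempty → S₂.Nonempty →
      S₁.card = S₂.card → ∀ n,
      ∑ i ∈ S₁, ∑ j ∈ S₂ᶜ, A n i j ≤ M * ∑ i ∈ S₁ᶜ, ∑ j ∈ S₂, A n i j) :
    (∀ (T : Finset (Fin s)), T.Nonempty → T ≠ Finset.univ → ∀ n,
      ∑ i ∈ T, ∑ j ∈ Tᶜ, (A n i j + A n j i) ≤
        (M + 1) * ∑ i ∈ Tᶜ, ∑ j ∈ T, A n i j) ∧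
    ((∀ T : Finset (Fin s), T.Nonempty → T ≠ Finset.univ →
      Tendsto (fun N => ∑ n ∈ Finset.range N,
        ∑ i ∈ T, ∑ j ∈ Tᶜ, (A n i j + A n j i)) atTop atTop)
     ↔
     (∀ T : Finset (Fin s), T.Nonempty → T ≠ Finset.univ →
      Tendsto (fun N => ∑ n ∈ Finset.range N,
        ∑ i ∈ Tᶜ, ∑ j ∈ T, A n i j) atTop atTop)) := by
  have twoWay_le : ∀ (T : Finset (Fin s)), T.Nonempty → T ≠ Finset.univ → ∀ n,
      ∑ i ∈ T, ∑ j ∈ Tᶜ, (A n i j + A n j i) ≤ (M + 1) * ∑ i ∈ Tᶜ, ∑ j ∈ T, A n i j :=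
    fun T hT _ n => sum_sum_compl_add_swap_le_of_le_mul _ _ (hbal T T hT hT rfl n)
  refine ⟨twoWay_le, forall₂_congr fun T hT => forall_congr' fun hTu => ?_⟩
  exact tendsto_sum_range_atTop_iff_of_le_of_le_mul (by linarith)
    (fun n => sum_compl_sum_le_sum_sum_compl_add_swap _ _ (hrs n).1) (twoWay_le T hT hTu)
end

section
/- Let (A_n) be a balanced asymmetric chain and define a highly-interactive digraph G_A on S = {1,…,s} with an edge from i to j iff ∑_{n=0}^∞ a_{ij}(n) = ∞. Then the reachability relation R (i R j iff there is a directed path from i to j in G_A, with i R i always) is an equivalence relation; in particular it is symmetric: if there is a directed path from i to j then there is a directed path from j to i. -/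
open Filter

open Classical in
private lemma balasym_key {s : ℕ}
    (A : ℕ → Matrix (Fin s) (Fin s) ℝ)
    (hrs : ∀ n, (∀ i j, 0 ≤ A n i j) ∧ ∀ i, ∑ j, A n i j = 1)
    (M : ℝ) (hM : 1 ≤ M)
    (hbal : ∀ (S₁ S₂ : Finset (Fin s)), S₁.Nonempty → S₂.Nonempty →
      S₁.card = S₂.card → ∀ n,
      ∑ i ∈ S₁, ∑ j ∈ S₂ᶜ, A n i j ≤ M * ∑ i ∈ S₁ᶜ, ∑ j ∈ S₂, A n i j)
    (i j : Fin s)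
    (hij : Tendsto (fun N => ∑ n ∈ Finset.range N, A n i j) atTop atTop) :
    Relation.ReflTransGen
      (fun i j : Fin s =>
        Tendsto (fun N => ∑ n ∈ Finset.range N, A n i j) atTop atTop) j i := by
  set R := fun i j : Fin s =>
    Tendsto (fun N => ∑ n ∈ Finset.range N, A n i j) atTop atTop with hR
  by_contra hji
  -- T : set of vertices reachable from j
  set T : Finset (Fin s) := Finset.univ.filter (fun k => Relation.ReflTransGen R j k) with hT
  have hjT : j ∈ T := by
    simp [hT, Relation.ReflTransGen.refl]
  have hiT : i ∉ T := by
    simp [hT, hji]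
  have hiTc : i ∈ Tᶜ := Finset.mem_compl.mpr hiT
  -- monotone partial sums
  have hmono : ∀ p q : Fin s, Monotone (fun N => ∑ n ∈ Finset.range N, A n p q) := by
    intro p q N₁ N₂ h
    apply Finset.sum_le_sum_of_subset_of_nonneg (Finset.range_subset_range.mpr h)
    intro n _ _
    exact (hrs n).1 p q
  -- no edges from T out of T, hence bounded partial sums
  have hb : ∀ p q : Fin s, ∃ C : ℝ, p ∈ T → q ∉ T →
      ∀ N, ∑ n ∈ Finset.range N, A n p q ≤ C := by
    intro p q
    by_cases hpq : p ∈ T ∧ q ∉ T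
    · obtain ⟨hp, hq⟩ := hpq
      have hnedge : ¬ R p q := by
        intro hedge
        have hjp : Relation.ReflTransGen R j p := by
          simpa [hT] using hp
        exact hq (by simp [hT, hjp.tail hedge])
      have hbdd : ∃ C : ℝ, ∀ N, ∑ n ∈ Finset.range N, A n p q ≤ C := by
        by_contra hCc
        push_neg at hCc
        apply hnedge
        apply tendsto_atTop_atTop_of_monotone' (hmono p q)
        rintro ⟨C0, hC'⟩
        obtain ⟨N, hN⟩ := hCc C0
        exact absurd (hC' ⟨N, rfl⟩) (not_le.mpr hN)
      obtain ⟨C0, h0⟩ := hbdd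
      exact ⟨C0, fun _ _ => h0⟩
    · exact ⟨0, fun h1 h2 => absurd ⟨h1, h2⟩ hpq⟩
  choose C hC using hb
  set B : ℝ := ∑ p ∈ T, ∑ q ∈ Tᶜ, C p q with hB
  -- the total flow out of T is bounded by B
  have hF : ∀ N, ∑ n ∈ Finset.range N, ∑ p ∈ T, ∑ q ∈ Tᶜ, A n p q ≤ B := by
    intro N
    have hswap : ∑ n ∈ Finset.range N, ∑ p ∈ T, ∑ q ∈ Tᶜ, A n p q
        = ∑ p ∈ T, ∑ q ∈ Tᶜ, ∑ n ∈ Finset.range N, A n p q := by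
      rw [Finset.sum_comm]
      exact Finset.sum_congr rfl fun p _ => Finset.sum_comm
    rw [hswap]
    apply Finset.sum_le_sum
    intro p hp
    apply Finset.sum_le_sum
    intro q hq
    exact hC p q hp (Finset.mem_compl.mp hq) N
  -- balancedness: flow into T ≤ M * flow out of T
  have hTcne : (Tᶜ : Finset (Fin s)).Nonempty := ⟨i, hiTc⟩
  have hbal' : ∀ n, ∑ p ∈ Tᶜ, ∑ q ∈ T, A n p q ≤ M * ∑ p ∈ T, ∑ q ∈ Tᶜ, A n p q := by
    intro n
    have := hbal Tᶜ Tᶜ hTcne hTcne rfl n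
    simpa [compl_compl] using this
  -- partial sums of A n i j are bounded by M * B
  have hMB : ∀ N, ∑ n ∈ Finset.range N, A n i j ≤ M * B := by
    intro N
    have h1 : ∀ n, A n i j ≤ ∑ p ∈ Tᶜ, ∑ q ∈ T, A n p q := by
      intro n
      calc A n i j ≤ ∑ q ∈ T, A n i q :=
            Finset.single_le_sum (fun q _ => (hrs n).1 i q) hjT
        _ ≤ ∑ p ∈ Tᶜ, ∑ q ∈ T, A n p q :=
            Finset.single_le_sum
              (fun p _ => Finset.sum_nonneg fun q _ => (hrs n).1 p q) hiTc
    calc ∑ n ∈ Finset.range N, A n i j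
        ≤ ∑ n ∈ Finset.range N, M * ∑ p ∈ T, ∑ q ∈ Tᶜ, A n p q :=
          Finset.sum_le_sum fun n _ => (h1 n).trans (hbal' n)
      _ = M * ∑ n ∈ Finset.range N, ∑ p ∈ T, ∑ q ∈ Tᶜ, A n p q := by
          rw [Finset.mul_sum]
      _ ≤ M * B := by
          exact mul_le_mul_of_nonneg_left (hF N) (zero_le_one.trans hM)
  obtain ⟨N, hN⟩ := (hij.eventually_gt_atTop (M * B)).exists
  exact absurd (hMB N) (not_le.mpr hN)

/-- For a balanced asymmetric chain, reachability in the strong interaction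
digraph (edge i → j iff ∑_n a_{ij}(n) = ∞) is an equivalence relation. -/
theorem balancedAsymmetric_reachability_equivalence {s : ℕ}
    (A : ℕ → Matrix (Fin s) (Fin s) ℝ)
    (hrs : ∀ n, (∀ i j, 0 ≤ A n i j) ∧ ∀ i, ∑ j, A n i j = 1)
    (M : ℝ) (hM : 1 ≤ M)
    (hbal : ∀ (S₁ S₂ : Finset (Fin s)), S₁.Nonempty → S₂.Nonempty →
      S₁.card = S₂.card → ∀ n,
      ∑ i ∈ S₁, ∑ j ∈ S₂ᶜ, A n i j ≤ M * ∑ i ∈ S₁ᶜ, ∑ j ∈ S₂, A n i j) :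
    Equivalence (Relation.ReflTransGen
      (fun i j : Fin s =>
        Tendsto (fun N => ∑ n ∈ Finset.range N, A n i j) atTop atTop)) := by
  set R := fun i j : Fin s =>
    Tendsto (fun N => ∑ n ∈ Finset.range N, A n i j) atTop atTop with hR
  refine ⟨fun _ => Relation.ReflTransGen.refl, ?_, fun h1 h2 => h1.trans h2⟩
  intro a b hab
  induction hab with
  | refl => exact Relation.ReflTransGen.refl
  | tail _ hedge ih =>
    exact (balasym_key A hrs M hM hbal _ _ hedge).trans ih
end

section
/- In the discrete Cucker–Smale model with f non-increasing and f(y) < 1/s for all y, the diameter function satisfies z(n+1) ≤ (1 − s f(g(n))) z(n) for all n, where g(n) = M_x + h ∑_{m=0}^{n−1} z(m). -/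
/-!
At step `n` every pairwise position distance is at most `g n`: initially by definition of `M_x`,
and each Euler step moves a pair apart by at most `h‖Vᵢ - Vⱼ‖ ≤ h z(n)`. As `f` is non-increasing,
all interaction weights at step `n` are at least `a = f (g n)`, and they are below `1 / s`. In each
coordinate the new velocity of particle `i` is then `a ∑ⱼ Vⱼ` plus a nonnegative combination of the
old velocities of total weight `1 - s a`, so the coordinate spread shrinks by the factor `1 - s a`.
-/

open Finset

section Spread

variable {ι : Type*} [Fintype ι]

noncomputable def spread (u : ι → ℝ) : ℝ := (⨆ i, u i) - ⨅ i, u i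

lemma abs_sub_le_spread (u : ι → ℝ) (i j : ι) : |u i - u j| ≤ spread u := by
  have hi : u i ≤ ⨆ k, u k := Finite.le_ciSup_of_le i le_rfl
  have hj : u j ≤ ⨆ k, u k := Finite.le_ciSup_of_le j le_rfl
  have hi' : ⨅ k, u k ≤ u i := Finite.ciInf_le_of_le i le_rfl
  have hj' : ⨅ k, u k ≤ u j := Finite.ciInf_le_of_le j le_rfl
  rw [spread, abs_le]
  constructor <;> linarith

variable [DecidableEq ι]

def consensusStep (c : ι → ι → ℝ) (u : ι → ℝ) (i : ι) : ℝ :=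
  u i + ∑ j ∈ univ.erase i, c i j * (u j - u i)

/-- `consensusStep c u i` is `a ∑ⱼ u j` plus a nonnegative combination of the `u j` of total weight
`1 - |ι| a`. -/
lemma consensusStep_le (i : ι) {c : ι → ι → ℝ} {u : ι → ℝ} {a M : ℝ}
    (hc : ∀ j ∈ univ.erase i, a ≤ c i j) (hS : ∑ j ∈ univ.erase i, c i j + a ≤ 1)
    (hu : ∀ j, u j ≤ M) :
    consensusStep c u i ≤ (1 - Fintype.card ι * a) * M + a * ∑ j, u j := by
  have hcard : ((univ.erase i).card : ℝ) = Fintype.card ι - 1 := by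
    rw [card_erase_of_mem (mem_univ i), card_univ,
      Nat.cast_sub (Fintype.card_pos_iff.mpr ⟨i⟩), Nat.cast_one]
  have hsum : ∑ j, u j = u i + ∑ j ∈ univ.erase i, u j := (add_sum_erase _ _ (mem_univ i)).symm
  have hothers : ∑ j ∈ univ.erase i, (c i j - a) * u j ≤ ∑ j ∈ univ.erase i, (c i j - a) * M :=
    sum_le_sum fun j hj => mul_le_mul_of_nonneg_left (hu j) (sub_nonneg.mpr (hc j hj))
  have hself : (1 - ∑ j ∈ univ.erase i, c i j - a) * u i ≤
      (1 - ∑ j ∈ univ.erase i, c i j - a) * M :=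
    mul_le_mul_of_nonneg_left (hu i) (by linarith)
  simp only [consensusStep, mul_sub, sub_mul, sum_sub_distrib, ← sum_mul, ← mul_sum, sum_const,
    nsmul_eq_mul, hcard] at hothers ⊢
  rw [hsum]
  linarith

lemma le_consensusStep (i : ι) {c : ι → ι → ℝ} {u : ι → ℝ} {a m : ℝ}
    (hc : ∀ j ∈ univ.erase i, a ≤ c i j) (hS : ∑ j ∈ univ.erase i, c i j + a ≤ 1)
    (hu : ∀ j, m ≤ u j) :
    (1 - Fintype.card ι * a) * m + a * ∑ j, u j ≤ consensusStep c u i := by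
  have hneg : consensusStep c (fun j => -u j) i = -consensusStep c u i := by
    simp only [consensusStep, neg_sub_neg, neg_add, ← sum_neg_distrib, ← mul_neg, neg_sub]
  have h := consensusStep_le i (u := fun j => -u j) hc hS fun j => neg_le_neg (hu j)
  rw [hneg, sum_neg_distrib] at h
  linarith

lemma spread_consensusStep_le [Nonempty ι] {c : ι → ι → ℝ} (u : ι → ℝ) {a : ℝ}
    (hc : ∀ i, ∀ j ∈ univ.erase i, a ≤ c i j) (hS : ∀ i, ∑ j ∈ univ.erase i, c i j + a ≤ 1) :
    spread (consensusStep c u) ≤ (1 - Fintype.card ι * a) * spread u := by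
  have hmax : (⨆ i, consensusStep c u i) ≤ (1 - Fintype.card ι * a) * (⨆ k, u k) + a * ∑ j, u j :=
    ciSup_le fun i => consensusStep_le i (hc i) (hS i) fun j => Finite.le_ciSup_of_le j le_rfl
  have hmin : (1 - Fintype.card ι * a) * (⨅ k, u k) + a * ∑ j, u j ≤ ⨅ i, consensusStep c u i :=
    le_ciInf fun i => le_consensusStep i (hc i) (hS i) fun j => Finite.ciInf_le_of_le j le_rfl
  rw [spread, spread]
  linarith

end Spread

lemma PiLp.norm_le_sum_norm {p : ENNReal} [Fact (1 ≤ p)] {ι : Type*} [Fintype ι]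
    {β : ι → Type*} [∀ r, SeminormedAddCommGroup (β r)] (x : PiLp p β) :
    ‖x‖ ≤ ∑ r, ‖x r‖ := by
  classical
  calc ‖x‖ = ‖∑ r, PiLp.single p r (x r)‖ := by
        congr 1; ext r; simp
    _ ≤ ∑ r, ‖PiLp.single p r (x r)‖ := norm_sum_le _ _
    _ = ∑ r, ‖x r‖ := by simp only [PiLp.norm_single]

lemma norm_sub_le_of_euler_step {E ι : Type*} [SeminormedAddCommGroup E] [NormedSpace ℝ E]
    {x v : ℕ → ι → E} {h D : ℝ} {w : ℕ → ℝ} (hh : 0 ≤ h)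
    (hx : ∀ n i, x (n + 1) i = x n i + h • v n i)
    (hx0 : ∀ i j, ‖x 0 i - x 0 j‖ ≤ D) (hv : ∀ n i j, ‖v n i - v n j‖ ≤ w n) :
    ∀ n i j, ‖x n i - x n j‖ ≤ D + h * ∑ m ∈ range n, w m := by
  intro n
  induction n with
  | zero => simpa using hx0
  | succ n ih =>
    intro i j
    have hstep : x (n + 1) i - x (n + 1) j = (x n i - x n j) + h • (v n i - v n j) := by
      rw [hx, hx, smul_sub]; abel
    calc ‖x (n + 1) i - x (n + 1) j‖ ≤ ‖x n i - x n j‖ + h * ‖v n i - v n j‖ := by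
          rw [hstep]
          exact (norm_add_le _ _).trans_eq (by rw [norm_smul, Real.norm_of_nonneg hh])
      _ ≤ (D + h * ∑ m ∈ range n, w m) + h * w n :=
          add_le_add (ih i j) (mul_le_mul_of_nonneg_left (hv n i j) hh)
      _ = D + h * ∑ m ∈ range (n + 1), w m := by rw [sum_range_succ]; ring

theorem cuckerSmale_diameter_contraction_general {s : ℕ} (hs : 0 < s)
    (X V : ℕ → Fin s → EuclideanSpace ℝ (Fin 3)) (h : ℝ) (hh : 0 < h)
    (f : ℝ → ℝ)
    (hf_anti : ∀ x y, 0 ≤ x → x ≤ y → f y ≤ f x)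
    (hf_lt : ∀ y, 0 ≤ y → f y < 1 / s)
    (hX : ∀ n i, X (n+1) i = X n i + h • V n i)
    (hV : ∀ n i, V (n+1) i = V n i +
      ∑ j ∈ Finset.univ.erase i, f ‖X n i - X n j‖ • (V n j - V n i))
    (z : ℕ → ℝ)
    (hz : ∀ m, z m = ∑ r : Fin 3, ((⨆ i, V m i r) - (⨅ i, V m i r)))
    (Mx : ℝ) (hMx : Mx = ⨆ i, ⨆ j, ‖X 0 i - X 0 j‖)
    (g : ℕ → ℝ) (hg : ∀ n, g n = Mx + h * ∑ m ∈ Finset.range n, z m) :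
    ∀ n, z (n+1) ≤ (1 - (s : ℝ) * f (g n)) * z n := by
  have : Nonempty (Fin s) := ⟨⟨0, hs⟩⟩
  have hVz : ∀ m i j, ‖V m i - V m j‖ ≤ z m := fun m i j => by
    rw [hz]
    exact (PiLp.norm_le_sum_norm _).trans
      (sum_le_sum fun r _ => abs_sub_le_spread (fun k => V m k r) i j)
  have hX0 : ∀ i j, ‖X 0 i - X 0 j‖ ≤ Mx := fun i j =>
    hMx ▸ Finite.le_ciSup_of_le i (Finite.le_ciSup_of_le j le_rfl)
  have hXg : ∀ m i j, ‖X m i - X m j‖ ≤ g m := fun m i j =>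
    hg m ▸ norm_sub_le_of_euler_step hh.le hX hX0 hVz m i j
  intro n
  have hg0 : 0 ≤ g n := (norm_nonneg _).trans (hXg n ⟨0, hs⟩ ⟨0, hs⟩)
  have hweight : ∀ i, ∑ j ∈ univ.erase i, f ‖X n i - X n j‖ + f (g n) ≤ 1 := fun i =>
    calc ∑ j ∈ univ.erase i, f ‖X n i - X n j‖ + f (g n)
        ≤ ∑ j ∈ univ.erase i, (1 / s : ℝ) + 1 / s :=
          add_le_add (sum_le_sum fun j _ => (hf_lt _ (norm_nonneg _)).le) (hf_lt _ hg0).le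
      _ = 1 := by
          rw [sum_erase_add _ _ (mem_univ i), sum_const, card_univ, Fintype.card_fin, nsmul_eq_mul]
          field_simp
  rw [hz, hz, mul_sum]
  refine sum_le_sum fun r _ => ?_
  have hcoord : (fun i => V (n + 1) i r) =
      consensusStep (fun i j => f ‖X n i - X n j‖) (fun i => V n i r) := by
    ext i; simp [consensusStep, hV]
  have hcontract := spread_consensusStep_le (fun i => V n i r)
    (fun i j _ => hf_anti _ _ (norm_nonneg _) (hXg n i j)) hweight
  rwa [← hcoord, Fintype.card_fin] at hcontract

/-- In the discrete Cucker–Smale model with f non-increasing and f(y) < 1/s,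
the diameter function satisfies z(n+1) ≤ (1 - s f(g(n))) z(n), where
g(n) = M_x + h ∑_{m<n} z(m). -/
theorem cuckerSmale_diameter_contraction {s : ℕ} (hs : 0 < s)
    (X V : ℕ → Fin s → EuclideanSpace ℝ (Fin 3)) (h : ℝ) (hh : 0 < h)
    (f : ℝ → ℝ) (hf_nonneg : ∀ y, 0 ≤ y → 0 ≤ f y)
    (hf_anti : ∀ x y, 0 ≤ x → x ≤ y → f y ≤ f x)
    (hf_lt : ∀ y, 0 ≤ y → f y < 1 / s)
    (hX : ∀ n i, X (n+1) i = X n i + h • V n i)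
    (hV : ∀ n i, V (n+1) i = V n i +
      ∑ j ∈ Finset.univ.erase i, f ‖X n i - X n j‖ • (V n j - V n i))
    (z : ℕ → ℝ)
    (hz : ∀ m, z m = ∑ r : Fin 3, ((⨆ i, V m i r) - (⨅ i, V m i r)))
    (Mx : ℝ) (hMx : Mx = ⨆ i, ⨆ j, ‖X 0 i - X 0 j‖)
    (g : ℕ → ℝ) (hg : ∀ n, g n = Mx + h * ∑ m ∈ Finset.range n, z m) :
    ∀ n, z (n+1) ≤ (1 - (s : ℝ) * f (g n)) * z n :=
  cuckerSmale_diameter_contraction_general hs X V h hh f hf_anti hf_lt hX hV z hz Mx hMx g hg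
end

section
/- Let z : ℕ → ℝ^{≥0} be non-increasing (z(n+1) ≤ z(n)), let h > 0, define g(n) = M_x + h ∑_{m=0}^{n−1} z(m), and let f : ℝ^{≥0} → ℝ^{≥0} be non-increasing with z(n+1) − z(n) ≤ −s f(g(n)) z(n) for all n. If z(0) < (s/h) ∫_{M_x}^∞ f(y) dy, then ∑_{n=0}^∞ z(n) < ∞ and lim_{n→∞} z(n) = 0. -/
open Filter

/-- Abstract convergence argument for the Cucker–Smale consensus proof:
if z decays by z(n+1) - z(n) ≤ -s f(g(n)) z(n) with g(n) = M_x + h ∑_{m<n} z(m)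
and z(0) < (s/h) ∫_{M_x}^∞ f, then ∑ z(n) < ∞ and z(n) → 0. -/
theorem cuckerSmale_abstract_convergence {s : ℕ} (hs : 0 < s)
    (z : ℕ → ℝ) (hz_nonneg : ∀ n, 0 ≤ z n) (hz_mono : ∀ n, z (n+1) ≤ z n)
    (h Mx : ℝ) (hh : 0 < h) (hMx : 0 ≤ Mx)
    (g : ℕ → ℝ) (hg : ∀ n, g n = Mx + h * ∑ m ∈ Finset.range n, z m)
    (f : ℝ → ℝ) (hf_nonneg : ∀ y, 0 ≤ y → 0 ≤ f y)
    (hf_anti : ∀ x y, 0 ≤ x → x ≤ y → f y ≤ f x)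
    (hdecay : ∀ n, z (n+1) - z n ≤ -((s : ℝ) * f (g n) * z n))
    (hinit : z 0 < ((s : ℝ) / h) * ∫ y in Set.Ioi Mx, f y) :
    Summable z ∧ Tendsto z atTop (nhds 0) := by
  have hz0 : (0:ℝ) ≤ z 0 := hz_nonneg 0
  have hsh : (0:ℝ) < (s:ℝ)/h := div_pos (by exact_mod_cast hs) hh
  have hIpos : 0 < ∫ y in Set.Ioi Mx, f y := by
    rcases lt_or_ge 0 (∫ y in Set.Ioi Mx, f y) with h1 | h1
    · exact h1
    · nlinarith [mul_nonpos_of_nonneg_of_nonpos hsh.le h1]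
  have hInt : MeasureTheory.IntegrableOn f (Set.Ioi Mx) := by
    by_contra hc
    rw [MeasureTheory.integral_undef hc] at hIpos
    exact lt_irrefl 0 hIpos
  have hgd : ∀ n, g (n+1) - g n = h * z n := by
    intro n
    rw [hg, hg, Finset.sum_range_succ]
    ring
  have hgmono : ∀ n, g n ≤ g (n+1) := by
    intro n
    nlinarith [hgd n, hz_nonneg n]
  have hgMx : ∀ n, Mx ≤ g n := by
    intro n
    rw [hg]
    have : 0 ≤ ∑ m ∈ Finset.range n, z m :=
      Finset.sum_nonneg fun m _ => hz_nonneg m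
    nlinarith
  have hII : ∀ n, IntervalIntegrable f MeasureTheory.volume (g n) (g (n+1)) := by
    intro n
    rw [intervalIntegrable_iff_integrableOn_Ioc_of_le (hgmono n)]
    exact hInt.mono_set (fun y hy => lt_of_le_of_lt (hgMx n) hy.1)
  have hstep : ∀ n, ∫ x in (g n)..(g (n+1)), f x ≤ h * (f (g n) * z n) := by
    intro n
    have hle := hgmono n
    have h0 : 0 ≤ g n := le_trans hMx (hgMx n)
    calc ∫ x in (g n)..(g (n+1)), f x
        ≤ ∫ _x in (g n)..(g (n+1)), f (g n) := by
          apply intervalIntegral.integral_mono_on hle (hII n) intervalIntegrable_const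
          intro x hx
          exact hf_anti (g n) x h0 hx.1
      _ = (g (n+1) - g n) * f (g n) := by
          simp [intervalIntegral.integral_const, smul_eq_mul]
      _ = h * (f (g n) * z n) := by rw [hgd n]; ring
  have hz_tel : ∀ n, z n ≤ z 0 - (s:ℝ) * ∑ m ∈ Finset.range n, f (g m) * z m := by
    intro n
    induction n with
    | zero => simp
    | succ n ih =>
      have hd := hdecay n
      rw [Finset.sum_range_succ]
      nlinarith
  have hkey : ∀ n, z n ≤ z 0 - ((s:ℝ)/h) * ∫ x in Mx..(g n), f x := by
    intro n
    have h1 := hz_tel n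
    have h2 : ∫ x in (g 0)..(g n), f x ≤ h * ∑ m ∈ Finset.range n, f (g m) * z m := by
      rw [← intervalIntegral.sum_integral_adjacent_intervals (fun i _ => hII i),
        Finset.mul_sum]
      exact Finset.sum_le_sum fun m _ => hstep m
    have hg0 : g 0 = Mx := by simp [hg]
    rw [hg0] at h2
    have h3 : ((s:ℝ)/h) * ∫ x in Mx..(g n), f x ≤
        (s:ℝ) * ∑ m ∈ Finset.range n, f (g m) * z m := by
      have := mul_le_mul_of_nonneg_left h2 hsh.le
      calc ((s:ℝ)/h) * ∫ x in Mx..(g n), f x ≤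
          ((s:ℝ)/h) * (h * ∑ m ∈ Finset.range n, f (g m) * z m) := this
        _ = (s:ℝ) * ∑ m ∈ Finset.range n, f (g m) * z m := by
            field_simp
    linarith
  have hsummable : Summable z := by
    by_contra hns
    have htend : Tendsto (fun n => ∑ m ∈ Finset.range n, z m) atTop atTop :=
      (not_summable_iff_tendsto_nat_atTop_of_nonneg hz_nonneg).mp hns
    have hgtend : Tendsto g atTop atTop := by
      have hgeq : g = fun n => Mx + h * ∑ m ∈ Finset.range n, z m := funext hg
      rw [hgeq]
      exact tendsto_atTop_add_const_left _ _ (htend.const_mul_atTop hh)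
    have hItend : Tendsto (fun n => ((s:ℝ)/h) * ∫ x in Mx..(g n), f x) atTop
        (nhds (((s:ℝ)/h) * ∫ y in Set.Ioi Mx, f y)) :=
      (MeasureTheory.intervalIntegral_tendsto_integral_Ioi Mx hInt hgtend).const_mul _
    obtain ⟨n, hn⟩ := (hItend.eventually (eventually_gt_nhds hinit)).exists
    have := hkey n
    have := hz_nonneg n
    linarith
  exact ⟨hsummable, hsummable.tendsto_atTop_zero⟩
end

section
/- In the discrete Cucker–Smale model, if f(y) < 1/s for all y ≥ 0 and M_v < (s/(3h)) ∫_{M_x}^∞ f(y) dy, then all velocities converge to a common limit, and there exists R ≥ 0 such that ‖X_i(n) − X_j(n)‖ ≤ R for all i, j and all n ≥ 0. -/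
/-!
Track the diameters `Dx n = diam (X n)` and `Dv n = diam (V n)`. The velocity update averages
the velocities with a symmetric stochastic matrix whose entries are at least `f (Dx n)` (this is
where `f < 1 / s` enters), so it preserves the mean velocity and gives
`Dv (n + 1) ≤ (1 - s f (Dx n)) Dv n`, while `Dx (n + 1) ≤ Dx n + h Dv n`. As `f` is
non-increasing, `Dv n + (s / h) ∫_{Mx}^{Dx n} f` is then non-increasing, so
`∫_{Mx}^{Dx n} f ≤ h Mv / s < ∫_{Mx}^∞ f`. This bounds `Dx n` by some `R` with `f R > 0`, after
which `Dv` decays geometrically at rate `1 - s f R`, and every velocity converges to the mean one.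
-/

open Filter Set Finset MeasureTheory Topology

namespace CuckerSmale

section Scalar

variable {f : ℝ → ℝ}

theorem intervalIntegrable_of_antitoneOn (hf : AntitoneOn f (Ici 0)) {a b : ℝ} (ha : 0 ≤ a)
    (hb : 0 ≤ b) : IntervalIntegrable f volume a b :=
  (hf.mono fun _ hy => (le_min ha hb).trans hy.1).intervalIntegrable

theorem intervalIntegral_le_mul_sub (hf : AntitoneOn f (Ici 0)) {a b : ℝ} (ha : 0 ≤ a)
    (hb : 0 ≤ b) : ∫ y in a..b, f y ≤ f a * (b - a) := by
  rcases le_total a b with hab | hba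
  · calc ∫ y in a..b, f y ≤ ∫ _ in a..b, f a :=
          intervalIntegral.integral_mono_on hab (intervalIntegrable_of_antitoneOn hf ha hb)
            intervalIntegrable_const fun y hy => hf ha (ha.trans hy.1) hy.1
      _ = f a * (b - a) := by simp [mul_comm]
  · have : f a * (a - b) ≤ ∫ y in b..a, f y :=
      calc f a * (a - b) = ∫ _ in b..a, f a := by simp [mul_comm]
        _ ≤ ∫ y in b..a, f y :=
          intervalIntegral.integral_mono_on hba intervalIntegrable_const
            (intervalIntegrable_of_antitoneOn hf hb ha) fun y hy => hf (hb.trans hy.1) ha hy.2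
    rw [intervalIntegral.integral_symm]
    linarith

theorem exists_pos_and_lt_intervalIntegral (hf : AntitoneOn f (Ici 0)) {a c : ℝ} (ha : 0 ≤ a)
    (hc : 0 ≤ c) (hcI : c < ∫ y in Ioi a, f y) : ∃ R, a ≤ R ∧ 0 < f R ∧ c < ∫ y in a..R, f y := by
  have hint : IntegrableOn f (Ioi a) := by
    by_contra hni
    rw [integral_undef hni] at hcI
    linarith
  set F : ℝ → ℝ := fun x => ∫ y in a..x, f y with hF
  obtain ⟨R₀, hcR₀, haR₀⟩ : ∃ R₀, c < F R₀ ∧ a ≤ R₀ :=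
    (((intervalIntegral_tendsto_integral_Ioi a hint tendsto_id).eventually
      (eventually_gt_nhds hcI)).and (eventually_ge_atTop a)).exists
  have hcont : ContinuousOn F (Icc a R₀) := by
    rw [← uIcc_of_le haR₀]
    exact intervalIntegral.continuousOn_primitive_interval'
      (intervalIntegrable_of_antitoneOn hf ha (ha.trans haR₀)) left_mem_uIcc
  -- `f` cannot vanish at a point where the primitive is still strictly below its value at `R₀`
  obtain ⟨R, ⟨haR, hRR₀⟩, hFR⟩ : (c + F R₀) / 2 ∈ F '' Icc a R₀ :=
    intermediate_value_Icc haR₀ hcont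
      ⟨by simp only [hF, intervalIntegral.integral_same]; linarith, by linarith⟩
  refine ⟨R, haR, ?_, by linarith⟩
  have hsplit : F R + ∫ y in R..R₀, f y = F R₀ :=
    intervalIntegral.integral_add_adjacent_intervals
      (intervalIntegrable_of_antitoneOn hf ha (ha.trans haR))
      (intervalIntegrable_of_antitoneOn hf (ha.trans haR) (ha.trans haR₀))
  have hle := intervalIntegral_le_mul_sub hf (ha.trans haR) (ha.trans haR₀)
  exact pos_of_mul_pos_left (by linarith : 0 < f R * (R₀ - R)) (by linarith)

theorem tendsto_zero_of_le_mul {v : ℕ → ℝ} {r : ℝ} (hr : r < 1) (hv : ∀ n, 0 ≤ v n)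
    (hstep : ∀ n, v (n + 1) ≤ r * v n) : Tendsto v atTop (𝓝 0) := by
  have hstep' : ∀ n, v (n + 1) ≤ max r 0 * v n := fun n =>
    (hstep n).trans (mul_le_mul_of_nonneg_right (le_max_left r 0) (hv n))
  refine squeeze_zero hv (fun n => le_geom (le_max_right r 0) n fun k _ => hstep' k) ?_
  simpa using (tendsto_pow_atTop_nhds_zero_of_lt_one (le_max_right r 0)
    (max_lt hr one_pos)).mul_const (v 0)

variable {h κ : ℝ} {x v : ℕ → ℝ}

theorem lyapunov_le (hf : AntitoneOn f (Ici 0)) (hf0 : ∀ y, 0 ≤ y → 0 ≤ f y) (hh : 0 < h)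
    (hκ : 0 ≤ κ) (hx : ∀ n, 0 ≤ x n) (hv_step : ∀ n, v (n + 1) ≤ (1 - κ * f (x n)) * v n)
    (hx_step : ∀ n, x (n + 1) ≤ x n + h * v n) (n : ℕ) :
    v n + κ / h * ∫ y in x 0..x n, f y ≤ v 0 := by
  induction n with
  | zero => simp
  | succ n ih =>
    have hsplit := intervalIntegral.integral_add_adjacent_intervals
      (intervalIntegrable_of_antitoneOn hf (hx 0) (hx n))
      (intervalIntegrable_of_antitoneOn hf (hx n) (hx (n + 1)))
    have hstep : ∫ y in x n..x (n + 1), f y ≤ f (x n) * (h * v n) :=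
      (intervalIntegral_le_mul_sub hf (hx n) (hx (n + 1))).trans
        (mul_le_mul_of_nonneg_left (by linarith [hx_step n]) (hf0 _ (hx n)))
    have hcancel : κ / h * (f (x n) * (h * v n)) = κ * f (x n) * v n := by
      field_simp
    calc v (n + 1) + κ / h * ∫ y in x 0..x (n + 1), f y
        = v (n + 1) + κ / h * (∫ y in x 0..x n, f y) + κ / h * ∫ y in x n..x (n + 1), f y := by
          rw [← hsplit]; ring
      _ ≤ (1 - κ * f (x n)) * v n + κ / h * (∫ y in x 0..x n, f y) + κ * f (x n) * v n :=
          add_le_add (add_le_add_left (hv_step n) _)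
            ((mul_le_mul_of_nonneg_left hstep (div_nonneg hκ hh.le)).trans_eq hcancel)
      _ = v n + κ / h * ∫ y in x 0..x n, f y := by ring
      _ ≤ v 0 := ih

theorem exists_bound_and_tendsto_zero (hf : AntitoneOn f (Ici 0)) (hf0 : ∀ y, 0 ≤ y → 0 ≤ f y)
    (hh : 0 < h) (hκ : 0 < κ) (hx : ∀ n, 0 ≤ x n) (hv : ∀ n, 0 ≤ v n)
    (hv_step : ∀ n, v (n + 1) ≤ (1 - κ * f (x n)) * v n)
    (hx_step : ∀ n, x (n + 1) ≤ x n + h * v n)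
    (hinit : v 0 < κ / h * ∫ y in Ioi (x 0), f y) :
    ∃ R, 0 ≤ R ∧ (∀ n, x n ≤ R) ∧ Tendsto v atTop (𝓝 0) := by
  have hc : h / κ * v 0 < ∫ y in Ioi (x 0), f y := by
    calc h / κ * v 0 < h / κ * (κ / h * ∫ y in Ioi (x 0), f y) :=
          mul_lt_mul_of_pos_left hinit (div_pos hh hκ)
      _ = ∫ y in Ioi (x 0), f y := by field_simp
  obtain ⟨R, hx0R, hfR, hcR⟩ :=
    exists_pos_and_lt_intervalIntegral hf (hx 0) (by have := hv 0; positivity) hc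
  have hR : 0 ≤ R := (hx 0).trans hx0R
  have hbound : ∀ n, x n ≤ R := by
    intro n
    by_contra! hRx
    have hmono : ∫ y in x 0..R, f y ≤ ∫ y in x 0..x n, f y :=
      intervalIntegral.integral_mono_interval le_rfl hx0R hRx.le
        ((ae_restrict_iff' measurableSet_Ioc).2 (Eventually.of_forall fun y hy =>
          hf0 y ((hx 0).trans hy.1.le)))
        (intervalIntegrable_of_antitoneOn hf (hx 0) (hx n))
    have hlyap := lyapunov_le hf hf0 hh hκ.le hx hv_step hx_step n
    have hle : ∫ y in x 0..x n, f y ≤ h / κ * v 0 :=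
      calc ∫ y in x 0..x n, f y = h / κ * (κ / h * ∫ y in x 0..x n, f y) := by field_simp
        _ ≤ h / κ * v 0 := mul_le_mul_of_nonneg_left (by linarith [hv n]) (div_pos hh hκ).le
    linarith
  refine ⟨R, hR, hbound,
    tendsto_zero_of_le_mul (r := 1 - κ * f R) (by nlinarith) hv fun n => ?_⟩
  have hfxR : f R ≤ f (x n) := hf (hx n) hR (hbound n)
  exact (hv_step n).trans (mul_le_mul_of_nonneg_right (by nlinarith) (hv n))

end Scalar

section Particles

variable {ι E : Type*} [SeminormedAddCommGroup E]

noncomputable def diam (u : ι → E) : ℝ := ⨆ i, ⨆ j, ‖u i - u j‖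

theorem norm_sub_le_diam [Finite ι] (u : ι → E) (i j : ι) : ‖u i - u j‖ ≤ diam u :=
  (le_ciSup (Set.finite_range _).bddAbove j).trans
    (le_ciSup (f := fun i => ⨆ j, ‖u i - u j‖) (Set.finite_range _).bddAbove i)

theorem diam_nonneg (u : ι → E) : 0 ≤ diam u :=
  Real.iSup_nonneg fun _ => Real.iSup_nonneg fun _ => norm_nonneg _

theorem diam_le {u : ι → E} {B : ℝ} (hu : ∀ i j, ‖u i - u j‖ ≤ B) (hB : 0 ≤ B) :
    diam u ≤ B :=
  Real.iSup_le (fun i => Real.iSup_le (hu i) hB) hB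

section Weight

variable [Fintype ι] [DecidableEq ι]

noncomputable def weight (f : ℝ → ℝ) (x : ι → E) (i j : ι) : ℝ :=
  if j = i then 1 - ∑ k ∈ univ.erase i, f ‖x i - x k‖ else f ‖x i - x j‖

theorem weight_comm (f : ℝ → ℝ) (x : ι → E) (i j : ι) :
    weight f x i j = weight f x j i := by
  rcases eq_or_ne i j with rfl | hij
  · rfl
  · rw [weight, weight, if_neg hij.symm, if_neg hij, norm_sub_rev]

theorem sum_weight (f : ℝ → ℝ) (x : ι → E) (i : ι) : ∑ j, weight f x i j = 1 := by
  rw [← Finset.add_sum_erase _ _ (mem_univ i),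
    Finset.sum_congr rfl fun j hj => by rw [weight, if_neg (ne_of_mem_erase hj)]]
  simp [weight]

theorem apply_diam_le_weight {f : ℝ → ℝ} (hf : AntitoneOn f (Ici 0))
    (hf_lt : ∀ y, 0 ≤ y → f y < (Fintype.card ι : ℝ)⁻¹) (x : ι → E) (i j : ι) :
    f (diam x) ≤ weight f x i j := by
  rw [weight]
  split_ifs with hji
  · have hcard : (Fintype.card ι : ℝ) ≠ 0 :=
      Nat.cast_ne_zero.2 (Fintype.card_pos_iff.2 ⟨i⟩).ne'
    have hsum : ∑ k ∈ univ.erase i, f ‖x i - x k‖ ≤ 1 - (Fintype.card ι : ℝ)⁻¹ :=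
      calc ∑ k ∈ univ.erase i, f ‖x i - x k‖
          ≤ #(univ.erase i) • (Fintype.card ι : ℝ)⁻¹ :=
            sum_le_card_nsmul _ _ _ fun k _ => (hf_lt _ (norm_nonneg _)).le
        _ = 1 - (Fintype.card ι : ℝ)⁻¹ := by
            rw [card_erase_of_mem (mem_univ i), nsmul_eq_mul, card_univ,
              Nat.cast_pred (Fintype.card_pos_iff.2 ⟨i⟩)]
            field_simp
    linarith [hf_lt _ (diam_nonneg x)]
  · exact hf (norm_nonneg _) (diam_nonneg x) (norm_sub_le_diam x i j)

end Weight

variable [NormedSpace ℝ E]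

theorem diam_add_smul_le [Finite ι] (x v : ι → E) {h : ℝ} (hh : 0 ≤ h) :
    diam (x + h • v) ≤ diam x + h * diam v := by
  refine diam_le (fun i j => ?_) (add_nonneg (diam_nonneg x) (mul_nonneg hh (diam_nonneg v)))
  calc ‖(x + h • v) i - (x + h • v) j‖ = ‖(x i - x j) + h • (v i - v j)‖ := by
        simp only [Pi.add_apply, Pi.smul_apply, smul_sub]; abel_nf
    _ ≤ ‖x i - x j‖ + h * ‖v i - v j‖ :=
        (norm_add_le _ _).trans_eq (by rw [norm_smul, Real.norm_of_nonneg hh])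
    _ ≤ diam x + h * diam v :=
        add_le_add (norm_sub_le_diam x i j)
          (mul_le_mul_of_nonneg_left (norm_sub_le_diam v i j) hh)

variable [Fintype ι]

theorem norm_sum_smul_sub_sum_smul_le {p q : ι → ℝ} (hp : ∀ j, 0 ≤ p j) (hq : ∀ j, 0 ≤ q j)
    (hpq : ∑ j, p j = ∑ j, q j) (u : ι → E) {D : ℝ} (hu : ∀ j k, ‖u j - u k‖ ≤ D) :
    ‖∑ j, p j • u j - ∑ j, q j • u j‖ ≤ (∑ j, p j) * D := by
  set T := ∑ j, p j with hT
  -- every unit of mass of `p` is paired with every unit of mass of `q`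
  have hpair :
      T • (∑ j, p j • u j - ∑ k, q k • u k) = ∑ j, ∑ k, (p j * q k) • (u j - u k) := by
    have h₁ : (∑ k, q k) • ∑ j, p j • u j = ∑ j, ∑ k, (p j * q k) • u j := by
      rw [Finset.sum_smul_sum, Finset.sum_comm]
      simp only [smul_smul, mul_comm]
    have h₂ : T • ∑ k, q k • u k = ∑ j, ∑ k, (p j * q k) • u k := by
      rw [Finset.sum_smul_sum]
      simp only [smul_smul]
    rw [smul_sub, h₂]
    nth_rewrite 1 [hpq]
    simp only [h₁, smul_sub, Finset.sum_sub_distrib]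
  have hpair_le : ‖∑ j, ∑ k, (p j * q k) • (u j - u k)‖ ≤ T * T * D := by
    calc ‖∑ j, ∑ k, (p j * q k) • (u j - u k)‖ ≤ ∑ j, ∑ k, p j * q k * D :=
          norm_sum_le_of_le _ fun j _ => norm_sum_le_of_le _ fun k _ => by
            rw [norm_smul, Real.norm_of_nonneg (mul_nonneg (hp j) (hq k))]
            exact mul_le_mul_of_nonneg_left (hu j k) (mul_nonneg (hp j) (hq k))
      _ = T * T * D := by simp_rw [← Finset.sum_mul, ← Finset.sum_mul_sum, ← hpq, ← hT]
  rcases (Finset.sum_nonneg fun j _ => hp j : 0 ≤ T).eq_or_lt with hT0 | hT0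
  · have hp0 := (Finset.sum_eq_zero_iff_of_nonneg fun j _ => hp j).1 hT0.symm
    have hq0 :=
      (Finset.sum_eq_zero_iff_of_nonneg fun j _ => hq j).1 (hpq.symm.trans hT0.symm)
    simp [hp0, hq0, hT]
  · rw [← hpair, norm_smul, Real.norm_of_nonneg hT0.le, mul_assoc] at hpair_le
    exact le_of_mul_le_mul_left hpair_le hT0

theorem norm_sum_smul_sub_sum_smul_le_diam {a b : ι → ℝ} {μ : ℝ} (ha : ∀ j, μ ≤ a j)
    (hb : ∀ j, μ ≤ b j) (ha1 : ∑ j, a j = 1) (hb1 : ∑ j, b j = 1) (u : ι → E) :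
    ‖∑ j, a j • u j - ∑ j, b j • u j‖ ≤ (1 - Fintype.card ι * μ) * diam u := by
  set c : ι → ℝ := fun j => min (a j) (b j)
  have hdiff : ∑ j, a j • u j - ∑ j, b j • u j
      = ∑ j, (a j - c j) • u j - ∑ j, (b j - c j) • u j := by
    simp only [sub_smul, Finset.sum_sub_distrib]; abel
  have hmass : ∑ j, (a j - c j) ≤ 1 - Fintype.card ι * μ := by
    have := Finset.card_nsmul_le_sum univ c μ fun j _ => le_min (ha j) (hb j)
    rw [Finset.sum_sub_distrib, ha1]
    simp only [card_univ, nsmul_eq_mul] at this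
    linarith
  rw [hdiff]
  refine (norm_sum_smul_sub_sum_smul_le (fun j => sub_nonneg.2 (min_le_left _ _))
    (fun j => sub_nonneg.2 (min_le_right _ _)) ?_ u (norm_sub_le_diam u)).trans
    (mul_le_mul_of_nonneg_right hmass (diam_nonneg u))
  simp only [Finset.sum_sub_distrib, ha1, hb1]

theorem norm_sub_mean_le_diam (u : ι → E) (i : ι) :
    ‖u i - (Fintype.card ι : ℝ)⁻¹ • ∑ j, u j‖ ≤ diam u := by
  have hcard : (Fintype.card ι : ℝ) ≠ 0 :=
    Nat.cast_ne_zero.2 (Fintype.card_pos_iff.2 ⟨i⟩).ne'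
  have hmean : u i - (Fintype.card ι : ℝ)⁻¹ • ∑ j, u j
      = (Fintype.card ι : ℝ)⁻¹ • ∑ j, (u i - u j) := by
    rw [Finset.sum_sub_distrib, sum_const, card_univ, smul_sub, ← Nat.cast_smul_eq_nsmul ℝ,
      smul_smul, inv_mul_cancel₀ hcard, one_smul]
  rw [hmean, norm_smul, norm_inv, Real.norm_natCast, inv_mul_le_iff₀ (by positivity)]
  calc ‖∑ j, (u i - u j)‖ ≤ ∑ _j : ι, diam u :=
        norm_sum_le_of_le _ fun j _ => norm_sub_le_diam u i j
    _ = Fintype.card ι * diam u := by simp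

variable [DecidableEq ι]

def velocityStep (f : ℝ → ℝ) (x v : ι → E) (i : ι) : E :=
  v i + ∑ j ∈ univ.erase i, f ‖x i - x j‖ • (v j - v i)

theorem velocityStep_eq_sum_weight_smul (f : ℝ → ℝ) (x v : ι → E) (i : ι) :
    velocityStep f x v i = ∑ j, weight f x i j • v j := by
  rw [← Finset.add_sum_erase _ _ (mem_univ i),
    Finset.sum_congr rfl fun j hj => by rw [weight, if_neg (ne_of_mem_erase hj)]]
  simp only [velocityStep, weight, if_pos, sub_smul, one_smul, Finset.sum_smul, smul_sub,
    Finset.sum_sub_distrib]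
  abel

theorem diam_velocityStep_le {f : ℝ → ℝ} (hf : AntitoneOn f (Ici 0))
    (hf_lt : ∀ y, 0 ≤ y → f y < (Fintype.card ι : ℝ)⁻¹) (x v : ι → E) :
    diam (velocityStep f x v) ≤ (1 - Fintype.card ι * f (diam x)) * diam v := by
  have hfx : Fintype.card ι * f (diam x) ≤ 1 :=
    (mul_le_mul_of_nonneg_left (hf_lt _ (diam_nonneg x)).le (Nat.cast_nonneg _)).trans
      mul_inv_le_one
  refine diam_le (fun i j => ?_) (mul_nonneg (by linarith) (diam_nonneg v))
  simp only [velocityStep_eq_sum_weight_smul]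
  exact norm_sum_smul_sub_sum_smul_le_diam (apply_diam_le_weight hf hf_lt x i)
    (apply_diam_le_weight hf hf_lt x j) (sum_weight f x i) (sum_weight f x j) v

theorem sum_velocityStep (f : ℝ → ℝ) (x v : ι → E) :
    ∑ i, velocityStep f x v i = ∑ i, v i := by
  simp only [velocityStep_eq_sum_weight_smul]
  rw [Finset.sum_comm]
  simp only [← Finset.sum_smul, weight_comm f x _, sum_weight, one_smul]

end Particles

end CuckerSmale

open CuckerSmale

theorem cuckerSmale_consensus_general {s : ℕ}
    (X V : ℕ → Fin s → EuclideanSpace ℝ (Fin 3)) (h : ℝ) (hh : 0 < h)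
    (f : ℝ → ℝ) (hf_nonneg : ∀ y, 0 ≤ y → 0 ≤ f y)
    (hf_anti : ∀ x y, 0 ≤ x → x ≤ y → f y ≤ f x)
    (hf_lt : ∀ y, 0 ≤ y → f y < 1 / s)
    (hX : ∀ n i, X (n+1) i = X n i + h • V n i)
    (hV : ∀ n i, V (n+1) i = V n i +
      ∑ j ∈ Finset.univ.erase i, f ‖X n i - X n j‖ • (V n j - V n i))
    (Mx Mv : ℝ)
    (hMx : Mx = ⨆ i, ⨆ j, ‖X 0 i - X 0 j‖)
    (hMv : Mv = ⨆ i, ⨆ j, ‖V 0 i - V 0 j‖)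
    (hinit : Mv < ((s : ℝ) / (3 * h)) * ∫ y in Set.Ioi Mx, f y) :
    (∃ c : EuclideanSpace ℝ (Fin 3),
      ∀ i, Tendsto (fun n => V n i) atTop (nhds c)) ∧
    (∃ R : ℝ, 0 ≤ R ∧ ∀ n (i j : Fin s), ‖X n i - X n j‖ ≤ R) := by
  have hfa : AntitoneOn f (Ici 0) := fun a ha _ _ hab => hf_anti a _ ha hab
  have hs : (0 : ℝ) < s := one_div_pos.1 ((hf_nonneg 0 le_rfl).trans_lt (hf_lt 0 le_rfl))
  have hf_lt' : ∀ y, 0 ≤ y → f y < (Fintype.card (Fin s) : ℝ)⁻¹ := by simpa using hf_lt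
  have hXn : ∀ n, X (n + 1) = X n + h • V n := fun n => funext (hX n)
  have hVn : ∀ n, V (n + 1) = velocityStep f (X n) (V n) := fun n => funext (hV n)
  have hinit' : diam (V 0) < s / h * ∫ y in Ioi (diam (X 0)), f y := by
    subst hMx hMv
    have hI : 0 ≤ ∫ y in Ioi (diam (X 0)), f y := setIntegral_nonneg measurableSet_Ioi
      fun y hy => hf_nonneg y ((diam_nonneg (X 0)).trans hy.le)
    refine hinit.trans_le (mul_le_mul_of_nonneg_right ?_ hI)
    exact div_le_div_of_nonneg_left hs.le hh (by linarith)
  obtain ⟨R, hR, hXR, hV0⟩ := exists_bound_and_tendsto_zero (x := fun n => diam (X n))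
    (v := fun n => diam (V n)) hfa hf_nonneg hh hs (fun n => diam_nonneg _)
    (fun n => diam_nonneg _)
    (fun n => by simpa [hVn] using diam_velocityStep_le hfa hf_lt' (X n) (V n))
    (fun n => by simpa [hXn] using diam_add_smul_le (X n) (V n) hh.le) hinit'
  have hmean : ∀ n, ∑ i, V n i = ∑ i, V 0 i :=
    Nat.rec rfl fun n ih => by rw [hVn, sum_velocityStep, ih]
  refine ⟨⟨(s : ℝ)⁻¹ • ∑ i, V 0 i, fun i => ?_⟩, R, hR, fun n i j =>
    (norm_sub_le_diam (X n) i j).trans (hXR n)⟩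
  refine tendsto_iff_norm_sub_tendsto_zero.2
    (squeeze_zero (fun _ => norm_nonneg _) (fun n => ?_) hV0)
  simpa [hmean] using norm_sub_mean_le_diam (V n) i

/-- Cucker–Smale consensus theorem: if f(y) < 1/s for all y ≥ 0 and
M_v < (s/(3h)) ∫_{M_x}^∞ f, then all velocities converge to a common limit
and all pairwise distances remain bounded. -/
theorem cuckerSmale_consensus {s : ℕ} (hs : 0 < s)
    (X V : ℕ → Fin s → EuclideanSpace ℝ (Fin 3)) (h : ℝ) (hh : 0 < h)
    (f : ℝ → ℝ) (hf_nonneg : ∀ y, 0 ≤ y → 0 ≤ f y)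
    (hf_anti : ∀ x y, 0 ≤ x → x ≤ y → f y ≤ f x)
    (hf_lt : ∀ y, 0 ≤ y → f y < 1 / s)
    (hX : ∀ n i, X (n+1) i = X n i + h • V n i)
    (hV : ∀ n i, V (n+1) i = V n i +
      ∑ j ∈ Finset.univ.erase i, f ‖X n i - X n j‖ • (V n j - V n i))
    (Mx Mv : ℝ)
    (hMx : Mx = ⨆ i, ⨆ j, ‖X 0 i - X 0 j‖)
    (hMv : Mv = ⨆ i, ⨆ j, ‖V 0 i - V 0 j‖)
    (hinit : Mv < ((s : ℝ) / (3 * h)) * ∫ y in Set.Ioi Mx, f y) :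
    (∃ c : EuclideanSpace ℝ (Fin 3),
      ∀ i, Tendsto (fun n => V n i) atTop (nhds c)) ∧
    (∃ R : ℝ, 0 ≤ R ∧ ∀ n (i j : Fin s), ‖X n i - X n j‖ ≤ R) :=
  cuckerSmale_consensus_general X V h hh f hf_nonneg hf_anti hf_lt hX hV Mx Mv hMx hMv hinit
end

section
/- In the JLM model with symmetric neighbor relation, the infinite flow property of the transition chain is equivalent to the following: for every nonempty proper subset T of the agents, ∑_{n=0}^∞ ∑_{i∈T, j∉T} a_{ij}(n) = ∞ if and only if ∑_{n=0}^∞ ∑_{i∉T, j∈T} a_{ij}(n) = ∞; i.e., since the chain is sub-symmetric with constant s/2, either both sums diverge or both converge. -/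
open Filter

private lemma tendsto_of_le_mul {c : ℝ} (hc : 0 < c) {f g : ℕ → ℝ}
    (h : ∀ N, f N ≤ c * g N) (hf : Tendsto f atTop atTop) :
    Tendsto g atTop atTop := by
  refine tendsto_atTop_mono (fun N => ?_) (hf.atTop_div_const hc)
  exact (div_le_iff₀' hc).2 (h N)

/-- In the JLM model (symmetric neighbor relation), the chain satisfies the
two-sided sub-symmetry bound (2/s) a_{ji} ≤ a_{ij} ≤ (s/2) a_{ji}, and for
every nonempty proper subset T the cut flows in the two directions either both
diverge or both converge; hence the infinite flow property is equivalent to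
the divergence of the one-directional cut sums. -/
theorem jlm_infFlow_equivalence {s : ℕ} (hs : 2 ≤ s)
    (D : ℕ → Fin s → Finset (Fin s))
    (hsym : ∀ n i j, j ∈ D n i ↔ i ∈ D n j)
    (hirr : ∀ n i, i ∉ D n i)
    (A : ℕ → Matrix (Fin s) (Fin s) ℝ)
    (hA : ∀ n i j, A n i j =
      if j = i ∨ j ∈ D n i then 1 / (1 + ((D n i).card : ℝ)) else 0) :
    (∀ n i j, (2 / (s : ℝ)) * A n j i ≤ A n i j ∧
      A n i j ≤ ((s : ℝ) / 2) * A n j i) ∧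
    (∀ T : Finset (Fin s), T.Nonempty → T ≠ Finset.univ →
      ((Tendsto (fun N => ∑ n ∈ Finset.range N,
          ∑ i ∈ T, ∑ j ∈ Tᶜ, A n i j) atTop atTop ↔
        Tendsto (fun N => ∑ n ∈ Finset.range N,
          ∑ i ∈ Tᶜ, ∑ j ∈ T, A n i j) atTop atTop) ∧
       (Tendsto (fun N => ∑ n ∈ Finset.range N,
          ∑ i ∈ T, ∑ j ∈ Tᶜ, (A n i j + A n j i)) atTop atTop ↔
        Tendsto (fun N => ∑ n ∈ Finset.range N,
          ∑ i ∈ T, ∑ j ∈ Tᶜ, A n i j) atTop atTop))) := by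
  have hs0 : (0 : ℝ) < s := by positivity
  have hs2 : (2 : ℝ) ≤ s := by exact_mod_cast hs
  -- nonnegativity of entries
  have hnn : ∀ n i j, 0 ≤ A n i j := by
    intro n i j
    rw [hA]
    split <;> positivity
  -- degree bound: card (D n i) ≤ s - 1
  have hcard : ∀ n i, ((D n i).card : ℝ) ≤ (s : ℝ) - 1 := by
    intro n i
    have h1 : D n i ⊆ Finset.univ.erase i := by
      intro x hx
      exact Finset.mem_erase.2 ⟨fun h => hirr n i (h ▸ hx), Finset.mem_univ x⟩
    have h2 : (D n i).card ≤ s - 1 := by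
      have := Finset.card_le_card h1
      simpa [Finset.card_erase_of_mem] using this
    have : ((D n i).card : ℝ) ≤ ((s - 1 : ℕ) : ℝ) := by exact_mod_cast h2
    calc ((D n i).card : ℝ) ≤ ((s - 1 : ℕ) : ℝ) := this
      _ ≤ (s : ℝ) - 1 := by
          have : (1 : ℕ) ≤ s := le_trans one_le_two hs
          rw [Nat.cast_sub this]
          norm_num
  -- one-sided bound, from which everything follows
  have key : ∀ n i j, A n i j ≤ ((s : ℝ) / 2) * A n j i := by
    intro n i j
    rcases eq_or_ne j i with rfl | hij
    · nlinarith [hnn n j j]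
    · by_cases hmem : j ∈ D n i
      · have himem : i ∈ D n j := (hsym n i j).1 hmem
        rw [hA n i j, hA n j i, if_pos (Or.inr hmem), if_pos (Or.inr himem)]
        have hci : (1 : ℝ) ≤ ((D n i).card : ℝ) := by
          exact_mod_cast Finset.card_pos.2 ⟨j, hmem⟩
        have hcj : ((D n j).card : ℝ) ≤ (s : ℝ) - 1 := hcard n j
        have h1 : 1 / (1 + ((D n i).card : ℝ)) ≤ 1 / 2 := by
          apply one_div_le_one_div_of_le <;> linarith
        have hnnj : (0:ℝ) ≤ ((D n j).card : ℝ) := Nat.cast_nonneg _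
        have h2 : 1 / (s : ℝ) ≤ 1 / (1 + ((D n j).card : ℝ)) := by
          apply one_div_le_one_div_of_le
          · linarith
          · linarith
        calc 1 / (1 + ((D n i).card : ℝ)) ≤ 1 / 2 := h1
          _ = ((s : ℝ) / 2) * (1 / (s : ℝ)) := by field_simp
          _ ≤ ((s : ℝ) / 2) * (1 / (1 + ((D n j).card : ℝ))) := by
              apply mul_le_mul_of_nonneg_left h2; positivity
      · have himem : i ∉ D n j := fun h => hmem ((hsym n i j).2 h)
        rw [hA n i j, hA n j i, if_neg, if_neg]
        · simp
        · push_neg; exact ⟨fun h => hij h.symm, himem⟩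
        · push_neg; exact ⟨hij, hmem⟩
  constructor
  · intro n i j
    refine ⟨?_, key n i j⟩
    have h := key n j i
    have h2 : (2/(s:ℝ)) * A n j i ≤ (2/(s:ℝ)) * (((s:ℝ)/2) * A n i j) :=
      mul_le_mul_of_nonneg_left h (by positivity)
    have heq : (2/(s:ℝ)) * (((s:ℝ)/2) * A n i j) = A n i j := by
      field_simp
    linarith
  · intro T hT hTu
    -- pointwise comparison of the per-step cut sums
    have hswap : ∀ n, (∑ i ∈ Tᶜ, ∑ j ∈ T, A n i j) = ∑ i ∈ T, ∑ j ∈ Tᶜ, A n j i := by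
      intro n; rw [Finset.sum_comm]
    have hle1 : ∀ n, (∑ i ∈ T, ∑ j ∈ Tᶜ, A n i j)
        ≤ ((s : ℝ) / 2) * ∑ i ∈ Tᶜ, ∑ j ∈ T, A n i j := by
      intro n
      rw [hswap, Finset.mul_sum]
      refine Finset.sum_le_sum fun i _ => ?_
      rw [Finset.mul_sum]
      exact Finset.sum_le_sum fun j _ => key n i j
    have hle2 : ∀ n, (∑ i ∈ Tᶜ, ∑ j ∈ T, A n i j)
        ≤ ((s : ℝ) / 2) * ∑ i ∈ T, ∑ j ∈ Tᶜ, A n i j := by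
      intro n
      rw [hswap, Finset.mul_sum]
      refine Finset.sum_le_sum fun i _ => ?_
      rw [Finset.mul_sum]
      exact Finset.sum_le_sum fun j _ => key n j i
    have hc : (0 : ℝ) < (s : ℝ) / 2 := by positivity
    constructor
    · constructor
      · intro h
        refine tendsto_of_le_mul hc (fun N => ?_) h
        rw [Finset.mul_sum]
        exact Finset.sum_le_sum fun n _ => hle1 n
      · intro h
        refine tendsto_of_le_mul hc (fun N => ?_) h
        rw [Finset.mul_sum]
        exact Finset.sum_le_sum fun n _ => hle2 n
    · have hsum : ∀ N, (∑ n ∈ Finset.range N, ∑ i ∈ T, ∑ j ∈ Tᶜ, (A n i j + A n j i))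
          = (∑ n ∈ Finset.range N, ∑ i ∈ T, ∑ j ∈ Tᶜ, A n i j)
            + ∑ n ∈ Finset.range N, ∑ i ∈ Tᶜ, ∑ j ∈ T, A n i j := by
        intro N
        rw [← Finset.sum_add_distrib]
        refine Finset.sum_congr rfl fun n _ => ?_
        rw [hswap, ← Finset.sum_add_distrib]
        refine Finset.sum_congr rfl fun i _ => ?_
        rw [← Finset.sum_add_distrib]
      constructor
      · intro h
        have hc' : (0 : ℝ) < 1 + (s : ℝ) / 2 := by positivity
        refine tendsto_of_le_mul hc' (fun N => ?_) h
        rw [hsum]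
        have h2 : (∑ n ∈ Finset.range N, ∑ i ∈ Tᶜ, ∑ j ∈ T, A n i j)
            ≤ ((s : ℝ) / 2) * ∑ n ∈ Finset.range N, ∑ i ∈ T, ∑ j ∈ Tᶜ, A n i j := by
          rw [Finset.mul_sum]
          exact Finset.sum_le_sum fun n _ => hle2 n
        nlinarith
      · intro h
        refine tendsto_atTop_mono (fun N => ?_) h
        rw [hsum]
        have : (0 : ℝ) ≤ ∑ n ∈ Finset.range N, ∑ i ∈ Tᶜ, ∑ j ∈ T, A n i j := by
          refine Finset.sum_nonneg fun n _ => Finset.sum_nonneg fun i _ =>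
            Finset.sum_nonneg fun j _ => hnn n i j
        linarith
end
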